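/- For the square of a path, χ'_st(P_n^2) = 3 if n = 3, χ'_st(P_n^2) = 4 if n = 4, and χ'_st(P_n^2) = 6 if n ≥ 5. -/
import Mathlib


open SimpleGraph

/-- A star edge-coloring with `k` colors: a proper edge-coloring such that no
path or cycle with four edges is bicolored. -/
def IsStarEdgeColoring {V : Type*} {k : ℕ} (G : SimpleGraph V) (c : Sym2 V → Fin k) : Prop :=
  (∀ ⦃e f : Sym2 V⦄, e ∈ G.edgeSet → f ∈ G.edgeSet → e ≠ f →
      (∃ v, v ∈ e ∧ v ∈ f) → c e ≠ c f) ∧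
  (∀ v0 v1 v2 v3 v4 : V, G.Adj v0 v1 → G.Adj v1 v2 → G.Adj v2 v3 → G.Adj v3 v4 →
      v0 ≠ v2 → v0 ≠ v3 → v1 ≠ v3 → v1 ≠ v4 → v2 ≠ v4 →
      ¬ (c s(v0, v1) = c s(v2, v3) ∧ c s(v1, v2) = c s(v3, v4)))

/-- The star chromatic index: the least `k` admitting a star `k`-edge-coloring. -/
noncomputable def starChromaticIndex {V : Type*} (G : SimpleGraph V) : ℕ :=
  sInf {k | ∃ c : Sym2 V → Fin k, IsStarEdgeColoring G c}

/-- The square of a graph: distinct vertices at distance at most two are adjacent. -/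
def graphSquare {V : Type*} (G : SimpleGraph V) : SimpleGraph V :=
  SimpleGraph.fromRel (fun u v => G.Adj u v ∨ ∃ w, G.Adj u w ∧ G.Adj w v)

/-! ### Auxiliary development -/

lemma sq_adj {n : ℕ} (u v : Fin n) :
    (graphSquare (pathGraph n)).Adj u v ↔ u.val ≠ v.val ∧
      (u.val + 1 = v.val ∨ v.val + 1 = u.val ∨ u.val + 2 = v.val ∨ v.val + 2 = u.val) := by
  rw [graphSquare, fromRel_adj]
  simp only [pathGraph_adj, ne_eq, Fin.ext_iff]
  constructor
  · rintro ⟨h, h2⟩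
    refine ⟨h, ?_⟩
    rcases h2 with (h2 | ⟨w, hw1, hw2⟩) | (h2 | ⟨w, hw1, hw2⟩) <;> omega
  · rintro ⟨h, h2⟩
    refine ⟨h, ?_⟩
    rcases h2 with h2 | h2 | h2 | h2
    · exact Or.inl (Or.inl (Or.inl h2))
    · exact Or.inl (Or.inl (Or.inr h2))
    · have hv : u.val + 1 < n := by omega
      exact Or.inl (Or.inr ⟨⟨u.val + 1, hv⟩, Or.inl rfl, Or.inl h2⟩)
    · have hv : v.val + 1 < n := by omega
      exact Or.inr (Or.inr ⟨⟨v.val + 1, hv⟩, Or.inl rfl, Or.inl h2⟩)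

/-- An explicit description of the square of the path graph. -/
def myG (n : ℕ) : SimpleGraph (Fin n) :=
  SimpleGraph.fromRel (fun u v => u.val + 1 = v.val ∨ u.val + 2 = v.val)

instance (n : ℕ) : DecidableRel (myG n).Adj := fun u v =>
  decidable_of_iff' _ (SimpleGraph.fromRel_adj _ u v)

lemma sq_eq_myG (n : ℕ) : graphSquare (pathGraph n) = myG n := by
  ext u v
  rw [sq_adj, myG, fromRel_adj]
  simp only [ne_eq, Fin.ext_iff]
  constructor
  · rintro ⟨h, h2⟩
    exact ⟨h, by omega⟩
  · rintro ⟨h, h2⟩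
    exact ⟨h, by omega⟩

/-! ### The 6-coloring for the square of any path -/

def tabf : ℕ → Fin 6
  | 0 => 0 | 1 => 2 | 2 => 3 | 3 => 5 | 4 => 0 | 5 => 1 | 6 => 3 | _ => 4
def tabg : ℕ → Fin 6
  | 0 => 1 | 1 => 1 | 2 => 4 | 3 => 4 | 4 => 2 | 5 => 2 | 6 => 5 | _ => 5

def N2 (u v : ℕ) : Fin 6 :=
  if max u v = min u v + 1 then tabf (min u v % 8) else tabg (min u v % 8)

def near (a b : ℕ) : Prop := a + 1 = b ∨ b + 1 = a ∨ a + 2 = b ∨ b + 2 = a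

instance : ∀ a b, Decidable (near a b) := fun a b => by unfold near; infer_instance

lemma N2_comm (u v : ℕ) : N2 u v = N2 v u := by
  simp [N2, max_comm, min_comm]

lemma N2_shift (p q k : ℕ) : N2 (p + 8 * k) (q + 8 * k) = N2 p q := by
  have h1 : min (p + 8 * k) (q + 8 * k) = min p q + 8 * k := by omega
  have h2 : max (p + 8 * k) (q + 8 * k) = max p q + 8 * k := by omega
  have h3 : (max p q + 8 * k = min p q + 8 * k + 1) ↔ (max p q = min p q + 1) := by omega
  simp only [N2, h1, h2, Nat.add_mul_mod_self_left, h3]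

set_option synthInstance.maxSize 400000 in
set_option maxHeartbeats 4000000 in
lemma N2_ne_bdd : ∀ a < 12, ∀ b < 12, near a b → ∀ x < 12, ∀ y < 12, near x y →
    (a = x ∨ a = y ∨ b = x ∨ b = y) → ¬(a = x ∧ b = y) → ¬(a = y ∧ b = x) →
    N2 a b ≠ N2 x y := by decide

set_option synthInstance.maxSize 400000 in
set_option maxHeartbeats 4000000 in
lemma N2_star_bdd : ∀ a < 16, ∀ b < 16, near a b → ∀ x < 16, near b x → a ≠ x →
    ∀ y < 16, near x y → a ≠ y → b ≠ y → ∀ z < 16, near y z → b ≠ z → x ≠ z →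
    ¬(N2 a b = N2 x y ∧ N2 b x = N2 y z) := by decide

lemma near_spread {a b : ℕ} (h : near a b) : a ≤ b + 2 ∧ b ≤ a + 2 ∧ a ≠ b := by
  unfold near at h; omega
lemma near_sub {a b k : ℕ} (h : near a b) (ha : 8 * k ≤ a) (hb : 8 * k ≤ b) :
    near (a - 8 * k) (b - 8 * k) := by
  unfold near at h ⊢; omega
lemma N2_ne (a b x y : ℕ) (hab : near a b) (hxy : near x y)
    (hsh : a = x ∨ a = y ∨ b = x ∨ b = y)
    (h1 : ¬(a = x ∧ b = y)) (h2 : ¬(a = y ∧ b = x)) : N2 a b ≠ N2 x y := by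
  have d1 := near_spread hab
  have d2 := near_spread hxy
  obtain ⟨k, hk1, hk2⟩ : ∃ k, 8 * k ≤ min (min a b) (min x y) ∧
      min (min a b) (min x y) < 8 * k + 8 :=
    ⟨min (min a b) (min x y) / 8, by omega, by omega⟩
  have hle : 8 * k ≤ a ∧ 8 * k ≤ b ∧ 8 * k ≤ x ∧ 8 * k ≤ y := by omega
  have hub : a < 8 * k + 12 ∧ b < 8 * k + 12 ∧ x < 8 * k + 12 ∧ y < 8 * k + 12 := by omega
  obtain ⟨l1, l2, l3, l4⟩ := hle
  obtain ⟨u1, u2, u3, u4⟩ := hub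
  clear hk1 hk2
  have ha : a = (a - 8 * k) + 8 * k := by omega
  have hb : b = (b - 8 * k) + 8 * k := by omega
  have hx : x = (x - 8 * k) + 8 * k := by omega
  have hy : y = (y - 8 * k) + 8 * k := by omega
  rw [ha, hb, hx, hy, N2_shift, N2_shift]
  exact N2_ne_bdd (a - 8 * k) (by omega) (b - 8 * k) (by omega) (near_sub hab l1 l2)
    (x - 8 * k) (by omega) (y - 8 * k) (by omega) (near_sub hxy l3 l4)
    (by omega) (by omega) (by omega)
lemma N2_star (a b x y z : ℕ) (h1 : near a b) (h2 : near b x) (h3 : near x y)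
    (h4 : near y z) (nax : a ≠ x) (nay : a ≠ y) (nby : b ≠ y) (nbz : b ≠ z)
    (nxz : x ≠ z) : ¬(N2 a b = N2 x y ∧ N2 b x = N2 y z) := by
  have d1 := near_spread h1
  have d2 := near_spread h2
  have d3 := near_spread h3
  have d4 := near_spread h4
  obtain ⟨k, hk1, hk2⟩ : ∃ k, 8 * k ≤ min (min (min a b) (min x y)) z ∧
      min (min (min a b) (min x y)) z < 8 * k + 8 :=
    ⟨min (min (min a b) (min x y)) z / 8, by omega, by omega⟩
  have hle : 8 * k ≤ a ∧ 8 * k ≤ b ∧ 8 * k ≤ x ∧ 8 * k ≤ y ∧ 8 * k ≤ z := by omega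
  have hub : a < 8 * k + 16 ∧ b < 8 * k + 16 ∧ x < 8 * k + 16 ∧ y < 8 * k + 16 ∧
      z < 8 * k + 16 := by omega
  obtain ⟨l1, l2, l3, l4, l5⟩ := hle
  obtain ⟨u1, u2, u3, u4, u5⟩ := hub
  clear hk1 hk2
  have ha : a = (a - 8 * k) + 8 * k := by omega
  have hb : b = (b - 8 * k) + 8 * k := by omega
  have hx : x = (x - 8 * k) + 8 * k := by omega
  have hy : y = (y - 8 * k) + 8 * k := by omega
  have hz : z = (z - 8 * k) + 8 * k := by omega
  rw [ha, hb, hx, hy, hz, N2_shift, N2_shift, N2_shift, N2_shift]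
  exact N2_star_bdd (a - 8 * k) (by omega) (b - 8 * k) (by omega) (near_sub h1 l1 l2)
    (x - 8 * k) (by omega) (near_sub h2 l2 l3) (by omega)
    (y - 8 * k) (by omega) (near_sub h3 l3 l4) (by omega) (by omega)
    (z - 8 * k) (by omega) (near_sub h4 l4 l5) (by omega) (by omega)

def cgen (n : ℕ) : Sym2 (Fin n) → Fin 6 :=
  Sym2.lift ⟨fun u v => N2 u.val v.val, fun u v => N2_comm _ _⟩

lemma star6 (n : ℕ) : IsStarEdgeColoring (graphSquare (pathGraph n)) (cgen n) := by
  constructor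
  · intro e f
    induction e using Sym2.ind with | _ a b =>
    induction f using Sym2.ind with | _ x y =>
    intro he hf hne hsh
    rw [SimpleGraph.mem_edgeSet, sq_adj] at he hf
    obtain ⟨v, hv1, hv2⟩ := hsh
    rw [Sym2.mem_iff] at hv1 hv2
    have hne' : ¬((a = x ∧ b = y) ∨ (a = y ∧ b = x)) := fun h => hne (Sym2.eq_iff.mpr h)
    simp only [cgen, Sym2.lift_mk]
    refine N2_ne _ _ _ _ he.2 hf.2 ?_ ?_ ?_
    · rcases hv1 with rfl | rfl <;> rcases hv2 with h | h <;>
        simp [Fin.ext_iff] at h ⊢ <;> omega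
    · rintro ⟨p, q⟩
      exact hne' (Or.inl ⟨Fin.ext p, Fin.ext q⟩)
    · rintro ⟨p, q⟩
      exact hne' (Or.inr ⟨Fin.ext p, Fin.ext q⟩)
  · intro v0 v1 v2 v3 v4 a01 a12 a23 a34 n02 n03 n13 n14 n24
    rw [sq_adj] at a01 a12 a23 a34
    simp only [cgen, Sym2.lift_mk]
    exact N2_star _ _ _ _ _ a01.2 a12.2 a23.2 a34.2
      (fun h => n02 (Fin.ext h)) (fun h => n03 (Fin.ext h)) (fun h => n13 (Fin.ext h))
      (fun h => n14 (Fin.ext h)) (fun h => n24 (Fin.ext h))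
set_option synthInstance.maxSize 1000000 in set_option maxHeartbeats 4000000 in
lemma no3 : ∀ x0 : Fin 2, ∀ x1 : Fin 2, x0 ≠ x1 → ∀ x2 : Fin 2, x0 ≠ x2 → x1 ≠ x2 → False := by decide

lemma nocol3 : ¬ ∃ c : Sym2 (Fin 3) → Fin 2, IsStarEdgeColoring (myG 3) c := by
  rintro ⟨c, h1, h2⟩
  refine no3 (c s(0,1)) (c s(0,2)) ?_ (c s(1,2)) ?_ ?_
  · exact h1 (e := s(0,1)) (f := s(0,2)) (by decide) (by decide) (by decide) ⟨0, by decide⟩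
  · exact h1 (e := s(0,1)) (f := s(1,2)) (by decide) (by decide) (by decide) ⟨1, by decide⟩
  · exact h1 (e := s(0,2)) (f := s(1,2)) (by decide) (by decide) (by decide) ⟨2, by decide⟩

set_option synthInstance.maxSize 1000000 in set_option maxHeartbeats 4000000 in
lemma no4 : ∀ x0 : Fin 3, ∀ x1 : Fin 3, x0 ≠ x1 → ∀ x2 : Fin 3, x0 ≠ x2 → x1 ≠ x2 → ∀ x3 : Fin 3, x0 ≠ x3 → x2 ≠ x3 → ∀ x4 : Fin 3, x1 ≠ x4 → x2 ≠ x4 → x3 ≠ x4 → ¬(x0 = x4 ∧ x1 = x3) → ¬(x0 = x4 ∧ x3 = x1) → ¬(x1 = x3 ∧ x0 = x4) → ¬(x1 = x3 ∧ x4 = x0) → ¬(x3 = x1 ∧ x0 = x4) → ¬(x3 = x1 ∧ x4 = x0) → ¬(x4 = x0 ∧ x1 = x3) → ¬(x4 = x0 ∧ x3 = x1) → False := by decide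

lemma nocol4 : ¬ ∃ c : Sym2 (Fin 4) → Fin 3, IsStarEdgeColoring (myG 4) c := by
  rintro ⟨c, h1, h2⟩
  refine no4 (c s(0,1)) (c s(0,2)) ?_ (c s(1,2)) ?_ ?_ (c s(1,3)) ?_ ?_ (c s(2,3)) ?_ ?_ ?_ ?_ ?_ ?_ ?_ ?_ ?_ ?_ ?_
  · exact h1 (e := s(0,1)) (f := s(0,2)) (by decide) (by decide) (by decide) ⟨0, by decide⟩
  · exact h1 (e := s(0,1)) (f := s(1,2)) (by decide) (by decide) (by decide) ⟨1, by decide⟩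
  · exact h1 (e := s(0,2)) (f := s(1,2)) (by decide) (by decide) (by decide) ⟨2, by decide⟩
  · exact h1 (e := s(0,1)) (f := s(1,3)) (by decide) (by decide) (by decide) ⟨1, by decide⟩
  · exact h1 (e := s(1,2)) (f := s(1,3)) (by decide) (by decide) (by decide) ⟨1, by decide⟩
  · exact h1 (e := s(0,2)) (f := s(2,3)) (by decide) (by decide) (by decide) ⟨2, by decide⟩
  · exact h1 (e := s(1,2)) (f := s(2,3)) (by decide) (by decide) (by decide) ⟨2, by decide⟩
  · exact h1 (e := s(1,3)) (f := s(2,3)) (by decide) (by decide) (by decide) ⟨3, by decide⟩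
  · exact fun hh => h2 1 0 2 3 1 (by decide) (by decide) (by decide) (by decide) (by decide) (by decide) (by decide) (by decide) (by decide) ⟨(congrArg c Sym2.eq_swap).trans (hh.1), (hh.2).trans (congrArg c Sym2.eq_swap)⟩
  · exact fun hh => h2 0 1 3 2 0 (by decide) (by decide) (by decide) (by decide) (by decide) (by decide) (by decide) (by decide) (by decide) ⟨(hh.1).trans (congrArg c Sym2.eq_swap), (hh.2).trans (congrArg c Sym2.eq_swap)⟩
  · exact fun hh => h2 2 0 1 3 2 (by decide) (by decide) (by decide) (by decide) (by decide) (by decide) (by decide) (by decide) (by decide) ⟨(congrArg c Sym2.eq_swap).trans (hh.1), (hh.2).trans (congrArg c Sym2.eq_swap)⟩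
  · exact fun hh => h2 0 2 3 1 0 (by decide) (by decide) (by decide) (by decide) (by decide) (by decide) (by decide) (by decide) (by decide) ⟨(hh.1).trans (congrArg c Sym2.eq_swap), (hh.2).trans (congrArg c Sym2.eq_swap)⟩
  · exact fun hh => h2 3 1 0 2 3 (by decide) (by decide) (by decide) (by decide) (by decide) (by decide) (by decide) (by decide) (by decide) ⟨(congrArg c Sym2.eq_swap).trans (hh.1), (congrArg c Sym2.eq_swap).trans (hh.2)⟩
  · exact fun hh => h2 1 3 2 0 1 (by decide) (by decide) (by decide) (by decide) (by decide) (by decide) (by decide) (by decide) (by decide) ⟨(hh.1).trans (congrArg c Sym2.eq_swap), (congrArg c Sym2.eq_swap).trans (hh.2)⟩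
  · exact fun hh => h2 3 2 0 1 3 (by decide) (by decide) (by decide) (by decide) (by decide) (by decide) (by decide) (by decide) (by decide) ⟨(congrArg c Sym2.eq_swap).trans (hh.1), (congrArg c Sym2.eq_swap).trans (hh.2)⟩
  · exact fun hh => h2 2 3 1 0 2 (by decide) (by decide) (by decide) (by decide) (by decide) (by decide) (by decide) (by decide) (by decide) ⟨(hh.1).trans (congrArg c Sym2.eq_swap), (congrArg c Sym2.eq_swap).trans (hh.2)⟩

set_option synthInstance.maxSize 1000000 in set_option maxHeartbeats 4000000 in
lemma no5 : ∀ x0 : Fin 5, ∀ x1 : Fin 5, x0 ≠ x1 → ∀ x2 : Fin 5, x0 ≠ x2 → x1 ≠ x2 → ∀ x3 : Fin 5, x0 ≠ x3 → x2 ≠ x3 → ∀ x4 : Fin 5, x1 ≠ x4 → x2 ≠ x4 → x3 ≠ x4 → ¬(x0 = x4 ∧ x1 = x3) → ¬(x0 = x4 ∧ x3 = x1) → ¬(x1 = x3 ∧ x0 = x4) → ¬(x1 = x3 ∧ x4 = x0) → ¬(x3 = x1 ∧ x0 = x4) → ¬(x3 = x1 ∧ x4 = x0) → ¬(x4 = x0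 ∧ x1 = x3) → ¬(x4 = x0 ∧ x3 = x1) → ∀ x5 : Fin 5, x1 ≠ x5 → x2 ≠ x5 → x4 ≠ x5 → ¬(x0 = x4 ∧ x3 = x5) → ¬(x3 = x1 ∧ x0 = x5) → ¬(x5 = x0 ∧ x1 = x3) → ¬(x5 = x3 ∧ x4 = x0) → ∀ x6 : Fin 5, x3 ≠ x6 → x4 ≠ x6 → x5 ≠ x6 → ¬(x0 = x4 ∧ x1 = x6) → ¬(x0 = x5 ∧ x1 = x6) → ¬(x0 = x4 ∧ x2 = x6) → ¬(x0 = x5 ∧ x2 = x6) → ¬(x0 = x6 ∧ x3 = x5) → ¬(x1 = x3 ∧ x0 = x6) → ¬(x1 = x3 ∧ x2 = x6) → ¬(x1 = x6 ∧ x5 = x3) → ¬(x2 = x6 ∧ x3 = x5) → ¬(x2 = x6 ∧ x5 = x3) → ¬(x3 = x5 ∧ x2 = x6) → ¬(x3 = x5 ∧ x6 = x1) → ¬(x3 = x5 ∧ x6 = x2) → ¬(x5 = x3 ∧ x2 = x6) → ¬(x5 = x3 ∧ x6 = x0) → ¬(x5 = x3 ∧ x6 = x2) → ¬(x6 = x0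 ∧ x3 = x1) → ¬(x6 = x2 ∧ x3 = x1) → ¬(x6 = x2 ∧ x3 = x5) → ¬(x6 = x1 ∧ x4 = x0) → ¬(x6 = x2 ∧ x4 = x0) → ¬(x6 = x1 ∧ x5 = x0) → ¬(x6 = x2 ∧ x5 = x0) → ¬(x6 = x2 ∧ x5 = x3) → False := by decide

lemma nocol5 : ¬ ∃ c : Sym2 (Fin 5) → Fin 5, IsStarEdgeColoring (myG 5) c := by
  rintro ⟨c, h1, h2⟩
  refine no5 (c s(0,1)) (c s(0,2)) ?_ (c s(1,2)) ?_ ?_ (c s(1,3)) ?_ ?_ (c s(2,3)) ?_ ?_ ?_ ?_ ?_ ?_ ?_ ?_ ?_ ?_ ?_ (c s(2,4)) ?_ ?_ ?_ ?_ ?_ ?_ ?_ (c s(3,4)) ?_ ?_ ?_ ?_ ?_ ?_ ?_ ?_ ?_ ?_ ?_ ?_ ?_ ?_ ?_ ?_ ?_ ?_ ?_ ?_ ?_ ?_ ?_ ?_ ?_ ?_ ?_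
  · exact h1 (e := s(0,1)) (f := s(0,2)) (by decide) (by decide) (by decide) ⟨0, by decide⟩
  · exact h1 (e := s(0,1)) (f := s(1,2)) (by decide) (by decide) (by decide) ⟨1, by decide⟩
  · exact h1 (e := s(0,2)) (f := s(1,2)) (by decide) (by decide) (by decide) ⟨2, by decide⟩
  · exact h1 (e := s(0,1)) (f := s(1,3)) (by decide) (by decide) (by decide) ⟨1, by decide⟩
  · exact h1 (e := s(1,2)) (f := s(1,3)) (by decide) (by decide) (by decide) ⟨1, by decide⟩
  · exact h1 (e := s(0,2)) (f := s(2,3)) (by decide) (by decide) (by decide) ⟨2, by decide⟩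
  · exact h1 (e := s(1,2)) (f := s(2,3)) (by decide) (by decide) (by decide) ⟨2, by decide⟩
  · exact h1 (e := s(1,3)) (f := s(2,3)) (by decide) (by decide) (by decide) ⟨3, by decide⟩
  · exact fun hh => h2 1 0 2 3 1 (by decide) (by decide) (by decide) (by decide) (by decide) (by decide) (by decide) (by decide) (by decide) ⟨(congrArg c Sym2.eq_swap).trans (hh.1), (hh.2).trans (congrArg c Sym2.eq_swap)⟩
  · exact fun hh => h2 0 1 3 2 0 (by decide) (by decide) (by decide) (by decide) (by decide) (by decide) (by decide) (by decide) (by decide) ⟨(hh.1).trans (congrArg c Sym2.eq_swap), (hh.2).trans (congrArg c Sym2.eq_swap)⟩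
  · exact fun hh => h2 2 0 1 3 2 (by decide) (by decide) (by decide) (by decide) (by decide) (by decide) (by decide) (by decide) (by decide) ⟨(congrArg c Sym2.eq_swap).trans (hh.1), (hh.2).trans (congrArg c Sym2.eq_swap)⟩
  · exact fun hh => h2 0 2 3 1 0 (by decide) (by decide) (by decide) (by decide) (by decide) (by decide) (by decide) (by decide) (by decide) ⟨(hh.1).trans (congrArg c Sym2.eq_swap), (hh.2).trans (congrArg c Sym2.eq_swap)⟩
  · exact fun hh => h2 3 1 0 2 3 (by decide) (by decide) (by decide) (by decide) (by decide) (by decide) (by decide) (by decide) (by decide) ⟨(congrArg c Sym2.eq_swap).trans (hh.1), (congrArg c Sym2.eq_swap).trans (hh.2)⟩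
  · exact fun hh => h2 1 3 2 0 1 (by decide) (by decide) (by decide) (by decide) (by decide) (by decide) (by decide) (by decide) (by decide) ⟨(hh.1).trans (congrArg c Sym2.eq_swap), (congrArg c Sym2.eq_swap).trans (hh.2)⟩
  · exact fun hh => h2 3 2 0 1 3 (by decide) (by decide) (by decide) (by decide) (by decide) (by decide) (by decide) (by decide) (by decide) ⟨(congrArg c Sym2.eq_swap).trans (hh.1), (congrArg c Sym2.eq_swap).trans (hh.2)⟩
  · exact fun hh => h2 2 3 1 0 2 (by decide) (by decide) (by decide) (by decide) (by decide) (by decide) (by decide) (by decide) (by decide) ⟨(hh.1).trans (congrArg c Sym2.eq_swap), (congrArg c Sym2.eq_swap).trans (hh.2)⟩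
  · exact h1 (e := s(0,2)) (f := s(2,4)) (by decide) (by decide) (by decide) ⟨2, by decide⟩
  · exact h1 (e := s(1,2)) (f := s(2,4)) (by decide) (by decide) (by decide) ⟨2, by decide⟩
  · exact h1 (e := s(2,3)) (f := s(2,4)) (by decide) (by decide) (by decide) ⟨2, by decide⟩
  · exact fun hh => h2 0 1 3 2 4 (by decide) (by decide) (by decide) (by decide) (by decide) (by decide) (by decide) (by decide) (by decide) ⟨(hh.1).trans (congrArg c Sym2.eq_swap), hh.2⟩
  · exact fun hh => h2 3 1 0 2 4 (by decide) (by decide) (by decide) (by decide) (by decide) (by decide) (by decide) (by decide) (by decide) ⟨(congrArg c Sym2.eq_swap).trans (hh.1), (congrArg c Sym2.eq_swap).trans (hh.2)⟩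
  · exact fun hh => h2 4 2 0 1 3 (by decide) (by decide) (by decide) (by decide) (by decide) (by decide) (by decide) (by decide) (by decide) ⟨(congrArg c Sym2.eq_swap).trans (hh.1), (congrArg c Sym2.eq_swap).trans (hh.2)⟩
  · exact fun hh => h2 4 2 3 1 0 (by decide) (by decide) (by decide) (by decide) (by decide) (by decide) (by decide) (by decide) (by decide) ⟨((congrArg c Sym2.eq_swap).trans (hh.1)).trans (congrArg c Sym2.eq_swap), (hh.2).trans (congrArg c Sym2.eq_swap)⟩
  · exact h1 (e := s(1,3)) (f := s(3,4)) (by decide) (by decide) (by decide) ⟨3, by decide⟩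
  · exact h1 (e := s(2,3)) (f := s(3,4)) (by decide) (by decide) (by decide) ⟨3, by decide⟩
  · exact h1 (e := s(2,4)) (f := s(3,4)) (by decide) (by decide) (by decide) ⟨4, by decide⟩
  · exact fun hh => h2 1 0 2 3 4 (by decide) (by decide) (by decide) (by decide) (by decide) (by decide) (by decide) (by decide) (by decide) ⟨(congrArg c Sym2.eq_swap).trans (hh.1), hh.2⟩
  · exact fun hh => h2 1 0 2 4 3 (by decide) (by decide) (by decide) (by decide) (by decide) (by decide) (by decide) (by decide) (by decide) ⟨(congrArg c Sym2.eq_swap).trans (hh.1), (hh.2).trans (congrArg c Sym2.eq_swap)⟩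
  · exact fun hh => h2 0 1 2 3 4 (by decide) (by decide) (by decide) (by decide) (by decide) (by decide) (by decide) (by decide) (by decide) ⟨hh.1, hh.2⟩
  · exact fun hh => h2 0 1 2 4 3 (by decide) (by decide) (by decide) (by decide) (by decide) (by decide) (by decide) (by decide) (by decide) ⟨hh.1, (hh.2).trans (congrArg c Sym2.eq_swap)⟩
  · exact fun hh => h2 0 1 3 4 2 (by decide) (by decide) (by decide) (by decide) (by decide) (by decide) (by decide) (by decide) (by decide) ⟨hh.1, (hh.2).trans (congrArg c Sym2.eq_swap)⟩
  · exact fun hh => h2 2 0 1 3 4 (by decide) (by decide) (by decide) (by decide) (by decide) (by decide) (by decide) (by decide) (by decide) ⟨(congrArg c Sym2.eq_swap).trans (hh.1), hh.2⟩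
  · exact fun hh => h2 0 2 1 3 4 (by decide) (by decide) (by decide) (by decide) (by decide) (by decide) (by decide) (by decide) (by decide) ⟨hh.1, (congrArg c Sym2.eq_swap).trans (hh.2)⟩
  · exact fun hh => h2 0 2 4 3 1 (by decide) (by decide) (by decide) (by decide) (by decide) (by decide) (by decide) (by decide) (by decide) ⟨(hh.1).trans (congrArg c Sym2.eq_swap), (hh.2).trans (congrArg c Sym2.eq_swap)⟩
  · exact fun hh => h2 2 1 3 4 2 (by decide) (by decide) (by decide) (by decide) (by decide) (by decide) (by decide) (by decide) (by decide) ⟨(congrArg c Sym2.eq_swap).trans (hh.1), (hh.2).trans (congrArg c Sym2.eq_swap)⟩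
  · exact fun hh => h2 1 2 4 3 1 (by decide) (by decide) (by decide) (by decide) (by decide) (by decide) (by decide) (by decide) (by decide) ⟨(hh.1).trans (congrArg c Sym2.eq_swap), (hh.2).trans (congrArg c Sym2.eq_swap)⟩
  · exact fun hh => h2 3 1 2 4 3 (by decide) (by decide) (by decide) (by decide) (by decide) (by decide) (by decide) (by decide) (by decide) ⟨(congrArg c Sym2.eq_swap).trans (hh.1), (hh.2).trans (congrArg c Sym2.eq_swap)⟩
  · exact fun hh => h2 1 3 4 2 0 (by decide) (by decide) (by decide) (by decide) (by decide) (by decide) (by decide) (by decide) (by decide) ⟨(hh.1).trans (congrArg c Sym2.eq_swap), (hh.2).trans (congrArg c Sym2.eq_swap)⟩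
  · exact fun hh => h2 1 3 4 2 1 (by decide) (by decide) (by decide) (by decide) (by decide) (by decide) (by decide) (by decide) (by decide) ⟨(hh.1).trans (congrArg c Sym2.eq_swap), (hh.2).trans (congrArg c Sym2.eq_swap)⟩
  · exact fun hh => h2 4 2 1 3 4 (by decide) (by decide) (by decide) (by decide) (by decide) (by decide) (by decide) (by decide) (by decide) ⟨(congrArg c Sym2.eq_swap).trans (hh.1), (congrArg c Sym2.eq_swap).trans (hh.2)⟩
  · exact fun hh => h2 2 4 3 1 0 (by decide) (by decide) (by decide) (by decide) (by decide) (by decide) (by decide) (by decide) (by decide) ⟨(hh.1).trans (congrArg c Sym2.eq_swap), ((congrArg c Sym2.eq_swap).trans (hh.2)).trans (congrArg c Sym2.eq_swap)⟩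
  · exact fun hh => h2 2 4 3 1 2 (by decide) (by decide) (by decide) (by decide) (by decide) (by decide) (by decide) (by decide) (by decide) ⟨(hh.1).trans (congrArg c Sym2.eq_swap), (congrArg c Sym2.eq_swap).trans (hh.2)⟩
  · exact fun hh => h2 4 3 1 0 2 (by decide) (by decide) (by decide) (by decide) (by decide) (by decide) (by decide) (by decide) (by decide) ⟨((congrArg c Sym2.eq_swap).trans (hh.1)).trans (congrArg c Sym2.eq_swap), (congrArg c Sym2.eq_swap).trans (hh.2)⟩
  · exact fun hh => h2 4 3 1 2 0 (by decide) (by decide) (by decide) (by decide) (by decide) (by decide) (by decide) (by decide) (by decide) ⟨(congrArg c Sym2.eq_swap).trans (hh.1), ((congrArg c Sym2.eq_swap).trans (hh.2)).trans (congrArg c Sym2.eq_swap)⟩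
  · exact fun hh => h2 4 3 1 2 4 (by decide) (by decide) (by decide) (by decide) (by decide) (by decide) (by decide) (by decide) (by decide) ⟨(congrArg c Sym2.eq_swap).trans (hh.1), (congrArg c Sym2.eq_swap).trans (hh.2)⟩
  · exact fun hh => h2 4 3 2 0 1 (by decide) (by decide) (by decide) (by decide) (by decide) (by decide) (by decide) (by decide) (by decide) ⟨((congrArg c Sym2.eq_swap).trans (hh.1)).trans (congrArg c Sym2.eq_swap), (congrArg c Sym2.eq_swap).trans (hh.2)⟩
  · exact fun hh => h2 4 3 2 1 0 (by decide) (by decide) (by decide) (by decide) (by decide) (by decide) (by decide) (by decide) (by decide) ⟨((congrArg c Sym2.eq_swap).trans (hh.1)).trans (congrArg c Sym2.eq_swap), ((congrArg c Sym2.eq_swap).trans (hh.2)).trans (congrArg c Sym2.eq_swap)⟩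
  · exact fun hh => h2 3 4 2 0 1 (by decide) (by decide) (by decide) (by decide) (by decide) (by decide) (by decide) (by decide) (by decide) ⟨(hh.1).trans (congrArg c Sym2.eq_swap), (congrArg c Sym2.eq_swap).trans (hh.2)⟩
  · exact fun hh => h2 3 4 2 1 0 (by decide) (by decide) (by decide) (by decide) (by decide) (by decide) (by decide) (by decide) (by decide) ⟨(hh.1).trans (congrArg c Sym2.eq_swap), ((congrArg c Sym2.eq_swap).trans (hh.2)).trans (congrArg c Sym2.eq_swap)⟩
  · exact fun hh => h2 3 4 2 1 3 (by decide) (by decide) (by decide) (by decide) (by decide) (by decide) (by decide) (by decide) (by decide) ⟨(hh.1).trans (congrArg c Sym2.eq_swap), (congrArg c Sym2.eq_swap).trans (hh.2)⟩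


lemma mono {V : Type*} {k k' : ℕ} (h : k ≤ k') {G : SimpleGraph V}
    (hc : ∃ c : Sym2 V → Fin k, IsStarEdgeColoring G c) :
    ∃ c : Sym2 V → Fin k', IsStarEdgeColoring G c := by
  obtain ⟨c, h1, h2⟩ := hc
  refine ⟨fun e => Fin.castLE h (c e), ?_, ?_⟩
  · intro e f he hf hne hsh hcc
    exact h1 he hf hne hsh (Fin.castLE_injective h hcc)
  · intro v0 v1 v2 v3 v4 a1 a2 a3 a4 m1 m2 m3 m4 m5 hh
    exact h2 v0 v1 v2 v3 v4 a1 a2 a3 a4 m1 m2 m3 m4 m5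
      ⟨Fin.castLE_injective h hh.1, Fin.castLE_injective h hh.2⟩

lemma restrict5 {n k : ℕ} (h : 5 ≤ n)
    (hc : ∃ c : Sym2 (Fin n) → Fin k, IsStarEdgeColoring (graphSquare (pathGraph n)) c) :
    ∃ c : Sym2 (Fin 5) → Fin k, IsStarEdgeColoring (myG 5) c := by
  obtain ⟨c, h1, h2⟩ := hc
  have hinj : Function.Injective (Fin.castLE h) := Fin.castLE_injective h
  have hadj : ∀ u v : Fin 5, (myG 5).Adj u v →
      (graphSquare (pathGraph n)).Adj (Fin.castLE h u) (Fin.castLE h v) := by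
    intro u v hu
    rw [myG, fromRel_adj] at hu
    rw [sq_adj]
    simp only [Fin.coe_castLE]
    obtain ⟨hne, hr⟩ := hu
    exact ⟨fun hh => hne (Fin.ext hh), by omega⟩
  refine ⟨fun e => c (e.map (Fin.castLE h)), ?_, ?_⟩
  · intro e f
    induction e using Sym2.ind with | _ a b =>
    induction f using Sym2.ind with | _ x y =>
    intro he hf hne hsh
    rw [SimpleGraph.mem_edgeSet] at he hf
    simp only [Sym2.map_pair_eq]
    refine h1 ((SimpleGraph.mem_edgeSet _).mpr (hadj _ _ he))
      ((SimpleGraph.mem_edgeSet _).mpr (hadj _ _ hf)) ?_ ?_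
    · intro hh
      apply hne
      apply Sym2.map.injective hinj
      rw [Sym2.map_pair_eq, Sym2.map_pair_eq]
      exact hh
    · obtain ⟨v, hv1, hv2⟩ := hsh
      refine ⟨Fin.castLE h v, ?_, ?_⟩
      · rcases Sym2.mem_iff.mp hv1 with rfl | rfl
        · exact Sym2.mem_iff.mpr (Or.inl rfl)
        · exact Sym2.mem_iff.mpr (Or.inr rfl)
      · rcases Sym2.mem_iff.mp hv2 with rfl | rfl
        · exact Sym2.mem_iff.mpr (Or.inl rfl)
        · exact Sym2.mem_iff.mpr (Or.inr rfl)
  · intro v0 v1 v2 v3 v4 a1 a2 a3 a4 m1 m2 m3 m4 m5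
    simp only [Sym2.map_pair_eq]
    exact h2 _ _ _ _ _ (hadj _ _ a1) (hadj _ _ a2) (hadj _ _ a3) (hadj _ _ a4)
      (fun hh => m1 (hinj hh)) (fun hh => m2 (hinj hh)) (fun hh => m3 (hinj hh))
      (fun hh => m4 (hinj hh)) (fun hh => m5 (hinj hh))

set_option synthInstance.maxSize 400000 in
instance {V : Type*} [Fintype V] [DecidableEq V] {k : ℕ} (G : SimpleGraph V)
    [DecidableRel G.Adj] (c : Sym2 V → Fin k) : Decidable (IsStarEdgeColoring G c) := by
  unfold IsStarEdgeColoring; infer_instance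

def c3 : Sym2 (Fin 3) → Fin 3 :=
  Sym2.lift ⟨fun u v => ⟨(u.val + v.val) % 3, Nat.mod_lt _ (by norm_num)⟩,
    fun u v => by simp [Nat.add_comm]⟩

set_option maxHeartbeats 1000000 in
lemma star3c : IsStarEdgeColoring (myG 3) c3 := by decide

def t4 : ℕ → ℕ → Fin 4 := fun a b =>
  if min a b = 0 ∧ max a b = 1 then 0
  else if min a b = 0 ∧ max a b = 2 then 1
  else if min a b = 1 ∧ max a b = 2 then 2
  else if min a b = 1 ∧ max a b = 3 then 1
  else 3

def c4 : Sym2 (Fin 4) → Fin 4 :=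
  Sym2.lift ⟨fun u v => t4 u.val v.val,
    fun u v => by simp [t4, Nat.min_comm, Nat.max_comm]⟩

set_option maxHeartbeats 1000000 in
lemma star4c : IsStarEdgeColoring (myG 4) c4 := by decide

theorem star_chromatic_index_path_square (n : ℕ) :
    (n = 3 → starChromaticIndex (graphSquare (pathGraph n)) = 3) ∧
    (n = 4 → starChromaticIndex (graphSquare (pathGraph n)) = 4) ∧
    (5 ≤ n → starChromaticIndex (graphSquare (pathGraph n)) = 6) := by
  refine ⟨?_, ?_, ?_⟩
  · rintro rfl
    rw [starChromaticIndex, sq_eq_myG]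
    apply le_antisymm
    · exact Nat.sInf_le ⟨c3, star3c⟩
    · apply le_csInf
      · exact ⟨3, c3, star3c⟩
      rintro k ⟨c, hc⟩
      by_contra hlt
      push_neg at hlt
      exact nocol3 (mono (by omega) ⟨c, hc⟩)
  · rintro rfl
    rw [starChromaticIndex, sq_eq_myG]
    apply le_antisymm
    · exact Nat.sInf_le ⟨c4, star4c⟩
    · apply le_csInf
      · exact ⟨4, c4, star4c⟩
      rintro k ⟨c, hc⟩
      by_contra hlt
      push_neg at hlt
      exact nocol4 (mono (by omega) ⟨c, hc⟩)
  · intro hn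
    rw [starChromaticIndex]
    apply le_antisymm
    · exact Nat.sInf_le ⟨cgen n, star6 n⟩
    · apply le_csInf
      · exact ⟨6, cgen n, star6 n⟩
      rintro k ⟨c, hc⟩
      by_contra hlt
      push_neg at hlt
      exact nocol5 (restrict5 hn (mono (by omega) ⟨c, hc⟩))
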